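/- arXiv:2006.02822 — 4 statements merged into one kernel-verified Lean document; each statement's English description precedes it below -/
import Mathlib

section
/- If Y ⊆ X are finite point sets in ℝ^d, then the layer number satisfies L(Y) ≤ L(X). -/
open scoped Classical RealInnerProductSpace
open Metric MeasureTheory

/-- The set of extreme points (convex-layer vertices) of a finite point set. -/
noncomputable def extremePts {d : ℕ} (S : Finset (EuclideanSpace ℝ (Fin d))) :
    Finset (EuclideanSpace ℝ (Fin d)) :=
  S.filter fun x =>
    x ∉ convexHull ℝ ((S.erase x : Finset (EuclideanSpace ℝ (Fin d))) :
      Set (EuclideanSpace ℝ (Fin d)))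

/-- `peel S k` is the set of points remaining after `k` peeling steps, i.e. `X_{k+1}`. -/
noncomputable def peel {d : ℕ} (S : Finset (EuclideanSpace ℝ (Fin d))) :
    ℕ → Finset (EuclideanSpace ℝ (Fin d))
  | 0 => S
  | k + 1 => peel S k \ extremePts (peel S k)

/-- The layer number: the number of peeling steps needed to remove all points. -/
noncomputable def layerNum {d : ℕ} (S : Finset (EuclideanSpace ℝ (Fin d))) : ℕ :=
  sInf {k | peel S k = ∅}

/-!
Peeling is monotone: a point of `Y` that lies in the convex hull of the other points of `Y`
also lies in the convex hull of the other points of any `X ⊇ Y`, so by induction the `k`-th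
peel of `Y` is contained in the `k`-th peel of `X`. Since a nonempty finite set always has an
extreme point (the convex hull is compact), every peeling step removes a point, so `X` is
exhausted after finitely many steps, and at that step the peel of `Y` is empty as well.
-/

section Peeling

variable {d : ℕ}

lemma extremePoints_convexHull_subset_extremePts (S : Finset (EuclideanSpace ℝ (Fin d))) :
    (convexHull ℝ (S : Set (EuclideanSpace ℝ (Fin d)))).extremePoints ℝ ⊆ extremePts S := by
  intro x hx
  have hxS : x ∈ S := extremePoints_convexHull_subset hx
  have hx_not_mem := ((convex_convexHull ℝ _).mem_extremePoints_iff_mem_sdiff_convexHull_sdiff.1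
    hx).2
  refine Finset.mem_filter.2 ⟨hxS, fun hx_mem => hx_not_mem (convexHull_mono ?_ hx_mem)⟩
  rw [Finset.coe_erase]
  exact Set.sdiff_subset_sdiff_left (subset_convexHull ℝ _)

lemma extremePts_nonempty {S : Finset (EuclideanSpace ℝ (Fin d))} (hS : S.Nonempty) :
    (extremePts S).Nonempty := by
  have hK : IsCompact (convexHull ℝ (S : Set (EuclideanSpace ℝ (Fin d)))) :=
    S.finite_toSet.isCompact_convexHull (𝕜 := ℝ)
  obtain ⟨x, hx⟩ :=
    hK.extremePoints_nonempty (convexHull_nonempty_iff.2 (Finset.coe_nonempty.2 hS))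
  exact ⟨x, extremePoints_convexHull_subset_extremePts S hx⟩

lemma sdiff_extremePts_mono {S T : Finset (EuclideanSpace ℝ (Fin d))} (hTS : T ⊆ S) :
    T \ extremePts T ⊆ S \ extremePts S := by
  intro x hx
  simp only [extremePts, Finset.mem_sdiff, Finset.mem_filter, not_and, not_not] at hx ⊢
  refine ⟨hTS hx.1, fun _ => convexHull_mono ?_ (hx.2 hx.1)⟩
  exact_mod_cast Finset.erase_subset_erase x hTS

lemma peel_mono {X Y : Finset (EuclideanSpace ℝ (Fin d))} (hYX : Y ⊆ X) (k : ℕ) :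
    peel Y k ⊆ peel X k := by
  induction k with
  | zero => exact hYX
  | succ k ih => exact sdiff_extremePts_mono ih

lemma peel_succ_ssubset {S : Finset (EuclideanSpace ℝ (Fin d))} {k : ℕ}
    (hk : (peel S k).Nonempty) : peel S (k + 1) ⊂ peel S k :=
  Finset.sdiff_ssubset (Finset.filter_subset _ _) (extremePts_nonempty hk)

lemma card_peel_le (S : Finset (EuclideanSpace ℝ (Fin d))) (k : ℕ) :
    (peel S k).card ≤ S.card - k := by
  induction k with
  | zero => exact Nat.le_refl _
  | succ k ih =>
    rcases (peel S k).eq_empty_or_nonempty with hk | hk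
    · simp only [peel, hk, Finset.empty_sdiff, Finset.card_empty, Nat.zero_le]
    · have := Finset.card_lt_card (peel_succ_ssubset hk)
      omega

lemma peel_card_eq_empty (S : Finset (EuclideanSpace ℝ (Fin d))) : peel S S.card = ∅ := by
  simpa using card_peel_le S S.card

end Peeling

theorem layerNum_mono {d : ℕ} (X Y : Finset (EuclideanSpace ℝ (Fin d)))
    (hYX : Y ⊆ X) :
    layerNum Y ≤ layerNum X := by
  have hX : peel X (layerNum X) = ∅ :=
    Nat.sInf_mem (s := {k | peel X k = ∅}) ⟨X.card, peel_card_eq_empty X⟩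
  exact Nat.sInf_le (Finset.subset_empty.1 (hX ▸ peel_mono hYX (layerNum X)))
end

section
/- If Y ⊆ X are finite point sets in ℝ^d with peeling sequences {Y_i} and {X_i}, then Y_k ⊆ X_k for every k ≥ 1. -/
open scoped Classical RealInnerProductSpace
open Metric MeasureTheory

theorem peel_seq_subset {d : ℕ} (X Y : Finset (EuclideanSpace ℝ (Fin d)))
    (hYX : Y ⊆ X) :
    ∀ k : ℕ, peel Y k ⊆ peel X k := by
  intro k
  induction k with
  | zero => exact hYX
  | succ k ih =>
    intro y hy
    simp only [peel, Finset.mem_sdiff, extremePts, Finset.mem_filter, not_and, not_not] at hy ⊢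
    obtain ⟨hyY, hy2⟩ := hy
    have hyX' : y ∈ peel X k := ih hyY
    refine ⟨hyX', fun _ => ?_⟩
    have hhull : y ∈ convexHull ℝ (((peel Y k).erase y : Finset _) :
        Set (EuclideanSpace ℝ (Fin d))) := hy2 hyY
    refine convexHull_mono ?_ hhull
    intro z hz
    simp only [Finset.coe_erase, Set.mem_diff, Set.mem_singleton_iff, Finset.mem_coe] at hz ⊢
    exact ⟨ih hz.1, hz.2⟩
end

section
/- Fix α > 1. If X is an α-evenly distributed finite point set in the closed unit disk in ℝ^2, then L(X) = O(|X|^{3/4}); precisely, there is a constant c depending only on α such that L(X) ≤ c·|X|^{3/4} for all such X with |X| sufficiently large. -/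
open scoped Classical RealInnerProductSpace
open Metric MeasureTheory

/-!
Each peeling step removes, for every direction `u`, a point maximising `⟪u, ·⟫`. So if `x`
survives `K` further steps, more than `K` of the remaining points lie at least as high as `x` in
the direction `u = x / ‖x‖`. If all remaining points lie in the disk of radius `ρ ≤ 1` and
`‖x‖ > ρ - w`, these points lie in a cap of depth `w` and half-width `√(2w)`, covered by
`O(w^{-1/2})` disks of radius `w`.
For `w = |X|^{-1/2}` even distribution bounds each such disk by `⌈απ⌉` points, so every
`O(α |X|^{1/4})` steps the enclosing radius drops by `|X|^{-1/2}`, and `|X|^{1/2}` such phases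
exhaust `X`.
-/

theorem IsCompact.exists_mem_extremePoints_forall_le {E : Type*} [AddCommGroup E] [Module ℝ E]
    [TopologicalSpace E] [T2Space E] [IsTopologicalAddGroup E] [ContinuousSMul ℝ E]
    [LocallyConvexSpace ℝ E] {A : Set E} (hA : IsCompact A) (hne : A.Nonempty)
    (l : StrongDual ℝ E) : ∃ p ∈ A.extremePoints ℝ, ∀ y ∈ A, l y ≤ l p := by
  obtain ⟨z, hzA, hz⟩ := hA.exists_isMaxOn hne l.continuous.continuousOn
  have hF : IsExposed ℝ A (l.toExposed A) := ContinuousLinearMap.toExposed.isExposed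
  obtain ⟨p, hp⟩ := (hF.isCompact hA).extremePoints_nonempty ⟨z, hzA, hz⟩
  exact ⟨p, hF.isExtreme.extremePoints_subset_extremePoints hp, hp.1.2⟩

theorem exists_norm_eq_one_inner_eq_norm {F : Type*} [NormedAddCommGroup F]
    [InnerProductSpace ℝ F] [Nontrivial F] (x : F) : ∃ u : F, ‖u‖ = 1 ∧ ⟪u, x⟫ = ‖x‖ := by
  rcases eq_or_ne x 0 with rfl | hx
  · obtain ⟨u, hu⟩ := exists_norm_eq F zero_le_one
    exact ⟨u, hu, by simp⟩
  · refine ⟨‖x‖⁻¹ • x, norm_smul_inv_norm hx, ?_⟩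
    rw [real_inner_smul_left, real_inner_self_eq_norm_sq, sq, inv_mul_cancel_left₀]
    exact norm_ne_zero_iff.2 hx

section Peeling

variable {d : ℕ}

theorem mem_extremePts_of_mem_extremePoints_convexHull {S : Finset (EuclideanSpace ℝ (Fin d))}
    {p : EuclideanSpace ℝ (Fin d)} (hp : p ∈ (convexHull ℝ (S : Set _)).extremePoints ℝ) :
    p ∈ extremePts S := by
  have hconv := ((convex_convexHull ℝ _).mem_extremePoints_iff_convex_sdiff.1 hp).2
  refine Finset.mem_filter.2 ⟨extremePoints_convexHull_subset hp, fun hmem => ?_⟩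
  have hsub : ((S.erase p : Finset _) : Set (EuclideanSpace ℝ (Fin d))) ⊆
      convexHull ℝ (S : Set _) \ {p} := by
    rw [Finset.coe_erase]
    exact Set.sdiff_subset_sdiff_left (subset_convexHull ℝ _)
  exact (convexHull_min hsub hconv hmem).2 rfl

theorem exists_mem_extremePts_forall_inner_le {S : Finset (EuclideanSpace ℝ (Fin d))}
    (hS : S.Nonempty) (u : EuclideanSpace ℝ (Fin d)) :
    ∃ p ∈ extremePts S, ∀ y ∈ S, ⟪u, y⟫ ≤ ⟪u, p⟫ := by
  obtain ⟨p, hp, hmax⟩ := (S.finite_toSet.isCompact_convexHull ℝ).exists_mem_extremePoints_forall_le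
    ((Finset.coe_nonempty.2 hS).mono (subset_convexHull ℝ _)) (innerSL ℝ u)
  exact ⟨p, mem_extremePts_of_mem_extremePoints_convexHull hp,
    fun y hy => hmax y (subset_convexHull ℝ _ hy)⟩

theorem peel_succ_subset (S : Finset (EuclideanSpace ℝ (Fin d))) (k : ℕ) :
    peel S (k + 1) ⊆ peel S k :=
  Finset.sdiff_subset

theorem peel_antitone (S : Finset (EuclideanSpace ℝ (Fin d))) : Antitone (peel S) :=
  antitone_nat_of_succ_le (peel_succ_subset S)

theorem peel_subset (S : Finset (EuclideanSpace ℝ (Fin d))) (k : ℕ) : peel S k ⊆ S :=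
  peel_antitone S (Nat.zero_le k)

variable {S : Finset (EuclideanSpace ℝ (Fin d))} {u x : EuclideanSpace ℝ (Fin d)}

/-- Each peeling step removes a maximiser of `⟪u, ·⟫`, which lies at least as high as `x`. -/
theorem card_filter_peel_succ_lt {j : ℕ} (hx : x ∈ peel S (j + 1)) :
    ((peel S (j + 1)).filter fun y => ⟪u, x⟫ ≤ ⟪u, y⟫).card <
      ((peel S j).filter fun y => ⟪u, x⟫ ≤ ⟪u, y⟫).card := by
  have hxj : x ∈ peel S j := peel_succ_subset S j hx
  obtain ⟨p, hp, hmax⟩ := exists_mem_extremePts_forall_inner_le ⟨x, hxj⟩ u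
  refine Finset.card_lt_card <| (Finset.ssubset_iff_of_subset
    (Finset.filter_subset_filter _ (peel_succ_subset S j))).2 ⟨p, ?_, fun hp' => ?_⟩
  · exact Finset.mem_filter.2 ⟨(Finset.mem_filter.1 hp).1, hmax x hxj⟩
  · exact (Finset.mem_sdiff.1 (Finset.mem_filter.1 hp').1).2 hp

theorem add_card_filter_peel_add_le {k K : ℕ} (hx : x ∈ peel S (k + K)) :
    K + ((peel S (k + K)).filter fun y => ⟪u, x⟫ ≤ ⟪u, y⟫).card ≤
      ((peel S k).filter fun y => ⟪u, x⟫ ≤ ⟪u, y⟫).card := by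
  induction K with
  | zero => simp
  | succ K ih =>
    rw [← add_assoc] at hx ⊢
    have := card_filter_peel_succ_lt (u := u) hx
    have := ih (peel_succ_subset S _ hx)
    omega

theorem lt_card_filter_peel_of_mem_peel_add {k K : ℕ} (hx : x ∈ peel S (k + K)) :
    K < ((peel S k).filter fun y => ⟪u, x⟫ ≤ ⟪u, y⟫).card := by
  have hpos : 0 < ((peel S (k + K)).filter fun y => ⟪u, x⟫ ≤ ⟪u, y⟫).card :=
    Finset.card_pos.2 ⟨x, Finset.mem_filter.2 ⟨hx, le_rfl⟩⟩
  have := add_card_filter_peel_add_le (u := u) hx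
  omega

variable [NeZero d] {w : ℝ} {K : ℕ}

theorem norm_le_sub_of_mem_peel_add {k : ℕ} {ρ : ℝ} (hk : ∀ y ∈ peel S k, ‖y‖ ≤ ρ)
    (hcap : ∀ u : EuclideanSpace ℝ (Fin d), ‖u‖ = 1 →
      (S.filter fun y => ‖y‖ ≤ ρ ∧ ρ - w < ⟪u, y⟫).card ≤ K)
    (hx : x ∈ peel S (k + K)) : ‖x‖ ≤ ρ - w := by
  by_contra! hfar
  obtain ⟨u, hu, hux⟩ := exists_norm_eq_one_inner_eq_norm x
  have hsub : ((peel S k).filter fun y => ⟪u, x⟫ ≤ ⟪u, y⟫) ⊆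
      S.filter fun y => ‖y‖ ≤ ρ ∧ ρ - w < ⟪u, y⟫ := by
    intro y hy
    obtain ⟨hyk, hxy⟩ := Finset.mem_filter.1 hy
    exact Finset.mem_filter.2 ⟨peel_subset S k hyk, hk y hyk, by linarith⟩
  have := (lt_card_filter_peel_of_mem_peel_add hx).trans_le
    ((Finset.card_le_card hsub).trans (hcap u hu))
  exact lt_irrefl K this

theorem norm_le_of_mem_peel_mul (hw : 0 ≤ w) (hS : ∀ x ∈ S, ‖x‖ ≤ 1)
    (hcap : ∀ ρ ≤ 1, ∀ u : EuclideanSpace ℝ (Fin d), ‖u‖ = 1 →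
      (S.filter fun y => ‖y‖ ≤ ρ ∧ ρ - w < ⟪u, y⟫).card ≤ K) :
    ∀ t : ℕ, ∀ x ∈ peel S (t * K), ‖x‖ ≤ 1 - t * w
  | 0, x, hx => by simpa using hS x (by rwa [zero_mul] at hx)
  | t + 1, x, hx => by
    have hρ : 1 - t * w ≤ 1 := sub_le_self 1 (by positivity)
    have := norm_le_sub_of_mem_peel_add (norm_le_of_mem_peel_mul hw hS hcap t) (hcap _ hρ)
      (by rwa [add_mul, one_mul] at hx)
    push_cast
    linarith

theorem layerNum_le_mul (hw : 0 ≤ w) (hS : ∀ x ∈ S, ‖x‖ ≤ 1)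
    (hcap : ∀ ρ ≤ 1, ∀ u : EuclideanSpace ℝ (Fin d), ‖u‖ = 1 →
      (S.filter fun y => ‖y‖ ≤ ρ ∧ ρ - w < ⟪u, y⟫).card ≤ K)
    {t : ℕ} (ht : 1 < t * w) : layerNum S ≤ t * K :=
  Nat.sInf_le <| Finset.eq_empty_of_forall_notMem fun x hx => by
    have := norm_le_of_mem_peel_mul hw hS hcap t x hx
    linarith [norm_nonneg x]

end Peeling

theorem exists_lt_abs_sub_le_half {b s w : ℝ} {m : ℕ} (hw : 0 < w) (hb : |b| ≤ s)
    (hm : 2 * s < m * w) : ∃ i < m, |b - (-s + (i + 1 / 2) * w)| ≤ w / 2 := by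
  obtain ⟨hbl, hbu⟩ := abs_le.1 hb
  have hnn : 0 ≤ (b + s) / w := div_nonneg (by linarith) hw.le
  have hle : (⌊(b + s) / w⌋₊ : ℝ) * w ≤ b + s := (le_div_iff₀ hw).1 (Nat.floor_le hnn)
  have hlt : b + s < (⌊(b + s) / w⌋₊ + 1) * w := (div_lt_iff₀ hw).1 (Nat.lt_floor_add_one _)
  refine ⟨⌊(b + s) / w⌋₊, ?_, abs_le.2 ⟨by linarith, by linarith⟩⟩
  have : (⌊(b + s) / w⌋₊ : ℝ) < m := (mul_lt_mul_iff_left₀ hw).1 (by linarith)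
  exact_mod_cast this

section Cap

open Module

variable {E : Type*} [NormedAddCommGroup E] [InnerProductSpace ℝ E] [Fact (finrank ℝ E = 2)]

theorem Orientation.norm_sub_sq_eq (o : Orientation ℝ E (Fin 2)) {u : E} (hu : ‖u‖ = 1)
    (y : E) (a b : ℝ) :
    ‖y - (a • u + b • o.rightAngleRotation u)‖ ^ 2 =
      (⟪u, y⟫ - a) ^ 2 + (o.areaForm u y - b) ^ 2 := by
  have h := o.inner_sq_add_areaForm_sq u (y - (a • u + b • o.rightAngleRotation u))
  simp only [inner_sub_right, inner_add_right, real_inner_smul_right, map_sub, map_add,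
    map_smul, smul_eq_mul, real_inner_self_eq_norm_sq, o.inner_rightAngleRotation_right,
    o.areaForm_apply_self, o.areaForm_rightAngleRotation_right, hu] at h
  linarith

/-- The cap cut from the disk of radius `ρ` by a strip of width `w` has half-width at most
`√(2w) ≤ s`, so `m` balls of radius `w` centred along its chord cover it. -/
theorem Orientation.exists_mem_closedBall_of_mem_cap (o : Orientation ℝ E (Fin 2)) {u y : E}
    (hu : ‖u‖ = 1) {ρ w s : ℝ} {m : ℕ} (hw : 0 < w) (hρ : ρ ≤ 1) (hs : 0 ≤ s)
    (hws : 2 * w ≤ s ^ 2) (hm : 2 * s < m * w) (hy : ‖y‖ ≤ ρ) (hyu : ρ - w < ⟪u, y⟫) :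
    ∃ i < m,
      y ∈ closedBall ((ρ - w / 2) • u + (-s + (i + 1 / 2) * w) • o.rightAngleRotation u) w := by
  have hpyth : ⟪u, y⟫ ^ 2 + o.areaForm u y ^ 2 = ‖y‖ ^ 2 := by
    simpa [hu] using o.inner_sq_add_areaForm_sq u y
  have hinner : |⟪u, y⟫| ≤ ρ := by
    simpa [hu] using (abs_real_inner_le_norm u y).trans (by simpa [hu] using hy)
  have hwidth : |o.areaForm u y| ≤ s := by
    refine abs_le_of_sq_le_sq' ?_ hs |> abs_le.2
    nlinarith [abs_le.1 hinner, norm_nonneg y]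
  obtain ⟨i, him, hi⟩ := exists_lt_abs_sub_le_half hw hwidth hm
  refine ⟨i, him, ?_⟩
  rw [mem_closedBall, dist_eq_norm, ← pow_le_pow_iff_left₀ (norm_nonneg _) hw.le two_ne_zero,
    o.norm_sub_sq_eq hu]
  have ha : |⟪u, y⟫ - (ρ - w / 2)| ≤ w / 2 := abs_le.2 ⟨by linarith, by linarith [abs_le.1 hinner]⟩
  nlinarith [sq_abs (⟪u, y⟫ - (ρ - w / 2)), sq_abs (o.areaForm u y - (-s + (i + 1 / 2) * w)),
    abs_nonneg (⟪u, y⟫ - (ρ - w / 2)), abs_nonneg (o.areaForm u y - (-s + (i + 1 / 2) * w))]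

theorem card_filter_cap_le (X : Finset E) {u : E} (hu : ‖u‖ = 1) {ρ w s : ℝ} {m B : ℕ}
    (hw : 0 < w) (hρ : ρ ≤ 1) (hs : 0 ≤ s) (hws : 2 * w ≤ s ^ 2) (hm : 2 * s < m * w)
    (hB : ∀ z, (X.filter fun y => y ∈ closedBall z w).card ≤ B) :
    (X.filter fun y => ‖y‖ ≤ ρ ∧ ρ - w < ⟪u, y⟫).card ≤ m * B := by
  have : FiniteDimensional ℝ E := .of_fact_finrank_eq_two
  let o : Orientation ℝ E (Fin 2) := (finBasisOfFinrankEq ℝ E Fact.out).orientation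
  let ball (i : ℕ) : Finset E := X.filter fun y =>
    y ∈ closedBall ((ρ - w / 2) • u + (-s + (i + 1 / 2) * w) • o.rightAngleRotation u) w
  have hcover : (X.filter fun y => ‖y‖ ≤ ρ ∧ ρ - w < ⟪u, y⟫) ⊆ (Finset.range m).biUnion ball := by
    intro y hy
    obtain ⟨hyX, hyρ, hyu⟩ := Finset.mem_filter.1 hy
    obtain ⟨i, him, hi⟩ := o.exists_mem_closedBall_of_mem_cap hu hw hρ hs hws hm hyρ hyu
    exact Finset.mem_biUnion.2 ⟨i, Finset.mem_range.2 him, Finset.mem_filter.2 ⟨hyX, hi⟩⟩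
  calc _ ≤ ((Finset.range m).biUnion ball).card := Finset.card_le_card hcover
    _ ≤ (Finset.range m).card * B := Finset.card_biUnion_le_card_mul _ _ _ fun i _ => hB _
    _ = m * B := by rw [Finset.card_range]

end Cap

open Real in
theorem card_filter_closedBall_le_ceil {α r : ℝ} (hα : 0 ≤ α) (hr : 0 < r)
    {X : Finset (EuclideanSpace ℝ (Fin 2))} (hXr : X.card * r ^ 2 = 1)
    (hX : ∀ z, ((X.filter fun x => x ∈ closedBall z r).card : ℤ)
      ≤ ⌈α * X.card * (volume (closedBall z r)).toReal⌉) (z : EuclideanSpace ℝ (Fin 2)) :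
    (X.filter fun x => x ∈ closedBall z r).card ≤ ⌈α * π⌉₊ := by
  have hvol : α * X.card * (volume (closedBall z r)).toReal = α * π := by
    rw [EuclideanSpace.volume_closedBall_fin_two, ENNReal.toReal_mul, ENNReal.toReal_pow,
      ENNReal.toReal_ofReal hr.le, ENNReal.toReal_ofReal pi_pos.le]
    linear_combination α * π * hXr
  have h := hX z
  rw [hvol, ← Int.natCast_ceil_eq_ceil (by positivity)] at h
  exact_mod_cast h

theorem layerNum_evenly_distributed_plane (α : ℝ) (hα : 1 < α) :
    ∃ c : ℝ, 0 < c ∧ ∃ N : ℕ, ∀ X : Finset (EuclideanSpace ℝ (Fin 2)),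
      (∀ x ∈ X, x ∈ closedBall (0 : EuclideanSpace ℝ (Fin 2)) 1) →
      (∀ (z : EuclideanSpace ℝ (Fin 2)) (r : ℝ), 0 < r →
        ((X.filter fun x => x ∈ closedBall z r).card : ℤ)
          ≤ ⌈α * X.card * (volume (closedBall z r)).toReal⌉) →
      N ≤ X.card →
      (layerNum X : ℝ) ≤ c * (X.card : ℝ) ^ ((3 : ℝ) / 4) := by
  refine ⟨50 * α, by positivity, 1, fun X hX hdist hN => ?_⟩
  obtain ⟨q, hq, hq4⟩ : ∃ q : ℝ, 1 ≤ q ∧ (X.card : ℝ) = q ^ 4 :=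
    ⟨(X.card : ℝ) ^ ((1 : ℝ) / 4), Real.one_le_rpow (by exact_mod_cast hN) (by norm_num), by
      rw [← Real.rpow_natCast, ← Real.rpow_mul (Nat.cast_nonneg _)]; norm_num⟩
  have : Fact (Module.finrank ℝ (EuclideanSpace ℝ (Fin 2)) = 2) := ⟨finrank_euclideanSpace_fin⟩
  -- strip width `w = q⁻² = |X|^{-1/2}`, cap half-width `s = 2q⁻¹`, `⌊4q⌋₊ + 1` disks per cap
  have hw : 0 < (q ^ 2)⁻¹ := by positivity
  have hm : 2 * (2 * q⁻¹) < (⌊4 * q⌋₊ + 1 : ℕ) * (q ^ 2)⁻¹ := calc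
    _ = 4 * q * (q ^ 2)⁻¹ := by field_simp; norm_num
    _ < _ := by gcongr; push_cast; exact Nat.lt_floor_add_one _
  have hcap : ∀ ρ ≤ 1, ∀ u : EuclideanSpace ℝ (Fin 2), ‖u‖ = 1 →
      (X.filter fun y => ‖y‖ ≤ ρ ∧ ρ - (q ^ 2)⁻¹ < ⟪u, y⟫).card ≤ (⌊4 * q⌋₊ + 1) * ⌈α * Real.pi⌉₊ :=
    fun ρ hρ u hu => card_filter_cap_le X hu hw hρ (by positivity) (by field_simp; nlinarith) hm
      (card_filter_closedBall_le_ceil (by linarith) hw (by rw [hq4]; field_simp)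
        fun z => hdist z _ hw)
  have hlayer := layerNum_le_mul hw.le (fun x hx => mem_closedBall_zero_iff.1 (hX x hx)) hcap
    (t := ⌊q ^ 2⌋₊ + 1) (by push_cast; field_simp; exact Nat.lt_floor_add_one _)
  have hceil : (⌈α * Real.pi⌉₊ : ℝ) ≤ 5 * α := by
    nlinarith [Nat.ceil_lt_add_one (by positivity : 0 ≤ α * Real.pi), Real.pi_lt_four]
  have hpow : (X.card : ℝ) ^ ((3 : ℝ) / 4) = q ^ 3 := by
    rw [hq4, ← Real.rpow_natCast, ← Real.rpow_mul (by positivity), ← Real.rpow_natCast]; norm_num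
  calc (layerNum X : ℝ) ≤ (⌊q ^ 2⌋₊ + 1) * ((⌊4 * q⌋₊ + 1) * ⌈α * Real.pi⌉₊) := by
        exact_mod_cast hlayer
    _ ≤ (2 * q ^ 2) * ((5 * q) * (5 * α)) := by
      gcongr
      · linarith [Nat.floor_le (by positivity : 0 ≤ q ^ 2), one_le_pow₀ (n := 2) hq]
      · linarith [Nat.floor_le (by positivity : 0 ≤ 4 * q)]
    _ = 50 * α * (X.card : ℝ) ^ ((3 : ℝ) / 4) := by rw [hpow]; ring
end

section
/- Let D_j and D_{j+1} be concentric disks in ℝ^2 centered at the origin of radii 1 − j/√n and 1 − (j+1)/√n respectively, with 0 ≤ j ≤ ⌊√n⌋ − 1 and n large. Then every cap of D_j \ D_{j+1} is contained in a rectangle with one side of length n^{−1/2} and the other side of length at most 2√2·n^{−1/4}. -/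
open scoped Classical RealInnerProductSpace
open Metric MeasureTheory

set_option maxHeartbeats 1000000 in
theorem cap_in_rectangle :
    ∃ N : ℕ, ∀ n : ℕ, N ≤ n → ∀ j : ℕ, j + 1 ≤ ⌊Real.sqrt n⌋₊ →
      ∀ u : EuclideanSpace ℝ (Fin 2), ‖u‖ = 1 →
        ∃ v : EuclideanSpace ℝ (Fin 2), ‖v‖ = 1 ∧ ⟪u, v⟫ = 0 ∧
          ∀ x ∈ closedBall (0 : EuclideanSpace ℝ (Fin 2)) (1 - j / Real.sqrt n),
            (1 - (j + 1) / Real.sqrt n) ≤ ⟪x, u⟫ →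
              ⟪x, u⟫ ≤ (1 - (j + 1) / Real.sqrt n) + (n : ℝ) ^ (-(1 : ℝ) / 2) ∧
              |⟪x, v⟫| ≤ Real.sqrt 2 * (n : ℝ) ^ (-(1 : ℝ) / 4) := by
  refine ⟨1, fun n hn j hj u hu => ?_⟩
  have hn0 : (0:ℝ) < n := by exact_mod_cast hn
  have hs : 0 < Real.sqrt n := Real.sqrt_pos.2 hn0
  set s := Real.sqrt n with hsdef
  set v : EuclideanSpace ℝ (Fin 2) :=
    (WithLp.equiv 2 (Fin 2 → ℝ)).symm ![-(u 1), u 0] with hv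
  have hv0 : v 0 = -(u 1) := by simp [hv]
  have hv1 : v 1 = u 0 := by simp [hv]
  have hu2 : (u 0)^2 + (u 1)^2 = 1 := by
    have h1 : ⟪u, u⟫ = 1 := by
      rw [real_inner_self_eq_norm_sq, hu]; norm_num
    rw [PiLp.inner_apply] at h1
    simp [Fin.sum_univ_two, RCLike.inner_apply] at h1
    nlinarith [h1]
  refine ⟨v, ?_, ?_, ?_⟩
  · have h1 : ⟪v, v⟫ = 1 := by
      rw [PiLp.inner_apply]
      simp [Fin.sum_univ_two, RCLike.inner_apply, hv0, hv1]
      nlinarith [hu2]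
    have := real_inner_self_eq_norm_sq v
    rw [h1] at this
    nlinarith [norm_nonneg v]
  · rw [PiLp.inner_apply]
    simp [Fin.sum_univ_two, RCLike.inner_apply, hv0, hv1]
    ring
  · intro x hx hlo
    have hxn : ‖x‖ ≤ 1 - j / s := by
      simpa using mem_closedBall_zero_iff.1 hx
    have hju : ((j:ℝ) + 1) ≤ s := by
      have h1 : ((j:ℝ) + 1) ≤ (⌊Real.sqrt n⌋₊ : ℝ) := by exact_mod_cast hj
      exact h1.trans (Nat.floor_le (Real.sqrt_nonneg _))
    have hR1 : (0:ℝ) ≤ 1 - ((j:ℝ) + 1) / s := by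
      rw [sub_nonneg, div_le_one hs]; exact hju
    have hhalf : (n : ℝ) ^ (-(1 : ℝ) / 2) = s⁻¹ := by
      rw [hsdef, Real.sqrt_eq_rpow, ← Real.rpow_neg (le_of_lt hn0)]
      norm_num
    have hRj : 1 - (j:ℝ) / s = (1 - ((j:ℝ) + 1) / s) + s⁻¹ := by
      field_simp; ring
    have hxu : ⟪x, u⟫ ≤ ‖x‖ := by
      have := real_inner_le_norm x u
      rwa [hu, mul_one] at this
    constructor
    · rw [hhalf]
      rw [← hRj]
      exact hxu.trans hxn
    · have key : ⟪x, u⟫^2 + ⟪x, v⟫^2 = ‖x‖^2 := by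
        rw [← real_inner_self_eq_norm_sq, PiLp.inner_apply, PiLp.inner_apply,
          PiLp.inner_apply]
        simp [Fin.sum_univ_two, RCLike.inner_apply, hv0, hv1]
        nlinarith [hu2]
      set a := ⟪x, u⟫ with ha
      set b := ⟪x, v⟫ with hb
      have hb2 : b^2 ≤ 2 / s := by
        have hx2 : a^2 + b^2 ≤ (1 - (j:ℝ)/s)^2 := by
          rw [key]
          nlinarith [hxn, norm_nonneg x]
        have hlo' : 1 - ((j:ℝ) + 1) / s ≤ a := by linarith [hlo]
        have ha2 : (1 - ((j:ℝ)+1)/s)^2 ≤ a^2 := by nlinarith [hlo', hR1]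
        have h3 : b^2 ≤ (1 - (j:ℝ)/s)^2 - (1 - ((j:ℝ)+1)/s)^2 := by linarith
        have hRjle : 1 - (j:ℝ)/s ≤ 1 := by
          have : (0:ℝ) ≤ (j:ℝ)/s := div_nonneg (Nat.cast_nonneg _) hs.le
          linarith
        calc b^2 ≤ (1 - (j:ℝ)/s)^2 - (1 - ((j:ℝ)+1)/s)^2 := h3
          _ = (1/s) * ((1 - (j:ℝ)/s) + (1 - ((j:ℝ)+1)/s)) := by field_simp; ring
          _ ≤ (1/s) * 2 := by
              apply mul_le_mul_of_nonneg_left _ (by positivity)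
              linarith
          _ = 2 / s := by ring
      have hrhs : (Real.sqrt 2 * (n : ℝ) ^ (-(1 : ℝ) / 4))^2 = 2 / s := by
        rw [mul_pow, Real.sq_sqrt (by norm_num : (0:ℝ) ≤ 2),
          ← Real.rpow_natCast ((n:ℝ) ^ (-(1 : ℝ) / 4)) 2,
          ← Real.rpow_mul (le_of_lt hn0),
          show (-(1:ℝ)/4 * (2:ℕ)) = -(1:ℝ)/2 by push_cast; norm_num, hhalf]
        ring
      have hrpos : (0:ℝ) ≤ Real.sqrt 2 * (n : ℝ) ^ (-(1 : ℝ) / 4) := by positivity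
      rw [← Real.sqrt_sq hrpos, ← Real.sqrt_sq_eq_abs]
      apply Real.sqrt_le_sqrt
      rw [hrhs]; exact hb2
end
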